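/- With notation as in the tangent cone decomposition, let G = Ξ_s + Ξ_{k−s} be the full projection of −∇f(X) onto T_X M_{≤k} and set G¹ = P_U(−∇f(X)) + Ξ_{k−s} (in the cone). If ‖G¹‖_F ≥ ‖G²‖_F where G² = (−∇f(X))P_V + Ξ_{k−s}, then ‖G¹‖_F² ≥ (1/2)‖G‖_F², and consequently ⟨∇f(X), G¹⟩_F = −‖G¹‖_F² ≤ −(1/√2)·g⁻(X)·‖G¹‖_F; i.e., G¹ satisfies the ω-angle condition with ω = 1/√2. -/
import Mathlib


open Matrix
/-- Column space of a matrix. -/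
def colSpace {m n : ℕ} (X : Matrix (Fin m) (Fin n) ℝ) : Set (Fin m → ℝ) :=
  {y | ∃ v, X.mulVec v = y}

/-- Row space of a matrix. -/
def rowSpace {m n : ℕ} (X : Matrix (Fin m) (Fin n) ℝ) : Set (Fin n → ℝ) :=
  colSpace Xᵀ

/-- Orthogonal complement (w.r.t. the Euclidean dot product) of a set of vectors. -/
def perp {p : ℕ} (S : Set (Fin p → ℝ)) : Set (Fin p → ℝ) :=
  {x | ∀ u ∈ S, ∑ i, x i * u i = 0}

/-- `A ⊗ B`: matrices whose column space lies in `A` and row space lies in `B`. -/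
def tensorSp {m n : ℕ} (A : Set (Fin m → ℝ)) (B : Set (Fin n → ℝ)) :
    Set (Matrix (Fin m) (Fin n) ℝ) :=
  {Z | (∀ v, Z.mulVec v ∈ A) ∧ (∀ u, Zᵀ.mulVec u ∈ B)}

/-- Frobenius inner product. -/
noncomputable def frobInner {m n : ℕ} (A B : Matrix (Fin m) (Fin n) ℝ) : ℝ :=
  ∑ i, ∑ j, A i j * B i j

/-- Frobenius norm. -/
noncomputable def frobNorm {m n : ℕ} (A : Matrix (Fin m) (Fin n) ℝ) : ℝ :=
  Real.sqrt (frobInner A A)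

/-- The tangent space `T_X M_s = (U⊗V) ⊕ (U^⊥⊗V) ⊕ (U⊗V^⊥)`, `U, V` column/row space of `X`. -/
def tangentMs {m n : ℕ} (X : Matrix (Fin m) (Fin n) ℝ) : Set (Matrix (Fin m) (Fin n) ℝ) :=
  {Ξ | ∃ Z₁ ∈ tensorSp (colSpace X) (rowSpace X),
       ∃ Z₂ ∈ tensorSp (perp (colSpace X)) (rowSpace X),
       ∃ Z₃ ∈ tensorSp (colSpace X) (perp (rowSpace X)), Ξ = Z₁ + Z₂ + Z₃}

/-- Sequential tangent cone of a set of matrices, w.r.t. Frobenius distance. -/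
def matTangentCone {m n : ℕ} (M : Set (Matrix (Fin m) (Fin n) ℝ))
    (X : Matrix (Fin m) (Fin n) ℝ) : Set (Matrix (Fin m) (Fin n) ℝ) :=
  {Ξ | ∃ (Y : ℕ → Matrix (Fin m) (Fin n) ℝ) (a : ℕ → ℝ),
      (∀ i, Y i ∈ M) ∧ (∀ i, 0 < a i) ∧
      Filter.Tendsto (fun i => frobNorm (Y i - X)) Filter.atTop (nhds 0) ∧
      Filter.Tendsto (fun i => frobNorm (a i • (Y i - X) - Ξ)) Filter.atTop (nhds 0)}

/-- `P` is the orthogonal projector (symmetric idempotent matrix) onto `U`. -/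
def IsOrthProjOnto {p : ℕ} (P : Matrix (Fin p) (Fin p) ℝ) (U : Set (Fin p → ℝ)) : Prop :=
  Pᵀ = P ∧ P * P = P ∧ colSpace P = U

open Matrix

namespace Stmt11Aux

lemma frobInner_comm' {m n : ℕ} (A B : Matrix (Fin m) (Fin n) ℝ) :
    frobInner A B = frobInner B A := by
  simp [frobInner, mul_comm]

lemma frobInner_eq_trace {m n : ℕ} (A B : Matrix (Fin m) (Fin n) ℝ) :
    frobInner A B = Matrix.trace (Aᵀ * B) := by
  simp only [frobInner, Matrix.trace, Matrix.diag, Matrix.mul_apply, Matrix.transpose_apply]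
  exact Finset.sum_comm

lemma frobInner_self_nonneg {m n : ℕ} (A : Matrix (Fin m) (Fin n) ℝ) :
    0 ≤ frobInner A A :=
  Finset.sum_nonneg fun i _ => Finset.sum_nonneg fun j _ => mul_self_nonneg _

lemma frobNorm_sq {m n : ℕ} (A : Matrix (Fin m) (Fin n) ℝ) :
    frobNorm A ^ 2 = frobInner A A :=
  Real.sq_sqrt (frobInner_self_nonneg A)

lemma frobNorm_nonneg {m n : ℕ} (A : Matrix (Fin m) (Fin n) ℝ) : 0 ≤ frobNorm A :=
  Real.sqrt_nonneg _

lemma frobInner_le_of_norm_le {m n : ℕ} {A B : Matrix (Fin m) (Fin n) ℝ}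
    (h : frobNorm A ≤ frobNorm B) : frobInner A A ≤ frobInner B B := by
  have := pow_le_pow_left₀ (frobNorm_nonneg A) h 2
  rwa [frobNorm_sq, frobNorm_sq] at this

lemma frobInner_add_left {m n : ℕ} (A B C : Matrix (Fin m) (Fin n) ℝ) :
    frobInner (A + B) C = frobInner A C + frobInner B C := by
  simp [frobInner, add_mul, Finset.sum_add_distrib]

lemma frobInner_add_right {m n : ℕ} (A B C : Matrix (Fin m) (Fin n) ℝ) :
    frobInner A (B + C) = frobInner A B + frobInner A C := by
  simp [frobInner, mul_add, Finset.sum_add_distrib]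

lemma frobInner_sub_left {m n : ℕ} (A B C : Matrix (Fin m) (Fin n) ℝ) :
    frobInner (A - B) C = frobInner A C - frobInner B C := by
  simp [frobInner, sub_mul, Finset.sum_sub_distrib]

lemma frobInner_sub_right {m n : ℕ} (A B C : Matrix (Fin m) (Fin n) ℝ) :
    frobInner A (B - C) = frobInner A B - frobInner A C := by
  simp [frobInner, mul_sub, Finset.sum_sub_distrib]

lemma frobInner_neg_left {m n : ℕ} (A B : Matrix (Fin m) (Fin n) ℝ) :
    frobInner (-A) B = -frobInner A B := by
  simp [frobInner, Finset.sum_neg_distrib]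

lemma frobInner_smul_left {m n : ℕ} (t : ℝ) (A B : Matrix (Fin m) (Fin n) ℝ) :
    frobInner (t • A) B = t * frobInner A B := by
  simp [frobInner, Finset.mul_sum, mul_assoc]

lemma frobInner_smul_right {m n : ℕ} (t : ℝ) (A B : Matrix (Fin m) (Fin n) ℝ) :
    frobInner A (t • B) = t * frobInner A B := by
  simp [frobInner, Finset.mul_sum]; congr 1; funext i; congr 1; funext j; ring

lemma vec_eq_zero_of_dot_self {p : ℕ} (v : Fin p → ℝ) (h : ∑ i, v i * v i = 0) : v = 0 := by
  funext i
  have := (Finset.sum_eq_zero_iff_of_nonneg (fun i _ => mul_self_nonneg (v i))).1 h i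
    (Finset.mem_univ i)
  exact mul_self_eq_zero.1 this

lemma proj_perp_eq_zero {p : ℕ} {P : Matrix (Fin p) (Fin p) ℝ} {U : Set (Fin p → ℝ)}
    (hP : IsOrthProjOnto P U) {y : Fin p → ℝ} (hy : y ∈ perp U) : P.mulVec y = 0 := by
  obtain ⟨hsym, hidem, hcol⟩ := hP
  have hmem : P.mulVec y ∈ U := hcol ▸ ⟨y, rfl⟩
  have h0 : P.mulVec y ⬝ᵥ y = 0 := by
    have := hy (P.mulVec y) hmem
    simpa [dotProduct, mul_comm] using this
  have h1 : P.mulVec y ⬝ᵥ P.mulVec y = 0 := by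
    rw [Matrix.dotProduct_mulVec, ← Matrix.mulVec_transpose, hsym, Matrix.mulVec_mulVec,
      hidem]
    exact h0
  exact vec_eq_zero_of_dot_self _ (by simpa [dotProduct] using h1)

lemma mul_eq_zero_of_cols {p n : ℕ} {P : Matrix (Fin p) (Fin p) ℝ}
    {Z : Matrix (Fin p) (Fin n) ℝ} (h : ∀ v, P.mulVec (Z.mulVec v) = 0) : P * Z = 0 := by
  ext i j
  have := congrFun (h (Pi.single j 1)) i
  rw [Matrix.mulVec_mulVec] at this
  simpa [Matrix.mulVec_single] using this

/-- `⟨R, Ξ⟩ = ⟨Ξ, Ξ⟩` when `Ξ` is a best approximation to `R` among its scalar multiples. -/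
lemma inner_eq_self_of_best {m n : ℕ} {R Ξ : Matrix (Fin m) (Fin n) ℝ}
    (hbest : ∀ t : ℝ, frobNorm (R - Ξ) ≤ frobNorm (R - t • Ξ)) :
    frobInner R Ξ = frobInner Ξ Ξ := by
  set c := frobInner R Ξ with hc
  set x := frobInner Ξ Ξ with hx
  have hexp : ∀ t : ℝ, frobInner (R - t • Ξ) (R - t • Ξ)
      = frobInner R R - 2 * t * c + t ^ 2 * x := by
    intro t
    have hRΞ : frobInner Ξ R = c := frobInner_comm' Ξ R
    simp only [frobInner_sub_left, frobInner_sub_right, frobInner_smul_left,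
      frobInner_smul_right, hRΞ, ← hc, ← hx]
    ring
  have key : ∀ t : ℝ, frobInner R R - 2 * c + x ≤ frobInner R R - 2 * t * c + t ^ 2 * x := by
    intro t
    have := frobInner_le_of_norm_le (hbest t)
    rw [hexp t] at this
    have h1 := hexp 1
    simp only [one_smul, one_pow] at h1
    linarith [h1 ▸ this]
  rcases eq_or_lt_of_le (frobInner_self_nonneg Ξ) with hx0 | hx0
  · have hΞ0 : Ξ = (0 : Matrix (Fin m) (Fin n) ℝ) := by
      ext i j
      have hz : ∀ i, (∑ j, Ξ i j * Ξ i j) = 0 := by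
        intro i
        have hnn : ∀ i ∈ Finset.univ, (0:ℝ) ≤ ∑ j, Ξ i j * Ξ i j :=
          fun i _ => Finset.sum_nonneg fun j _ => mul_self_nonneg _
        exact (Finset.sum_eq_zero_iff_of_nonneg hnn).1 hx0.symm i (Finset.mem_univ i)
      have := congrFun (vec_eq_zero_of_dot_self (fun j => Ξ i j) (hz i)) j
      simpa using this
    simp [hc, hx, hΞ0, frobInner]
  · have hxne : x ≠ 0 := ne_of_gt hx0
    have hkey := key (c / x)
    have : (c - x) ^ 2 ≤ 0 := by
      have h2 : -2 * c + x ≤ -2 * (c / x) * c + (c / x) ^ 2 * x := by linarith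
      have h3 : -2 * (c / x) * c + (c / x) ^ 2 * x = -(c ^ 2) / x := by
        field_simp; ring
      rw [h3] at h2
      have h4 : (-2 * c + x) * x ≤ -(c ^ 2) := by
        have := mul_le_mul_of_nonneg_right h2 (le_of_lt hx0)
        calc (-2 * c + x) * x ≤ (-(c ^ 2) / x) * x := this
          _ = -(c ^ 2) := by field_simp
      nlinarith
    have := sq_nonneg (c - x)
    have : (c - x) ^ 2 = 0 := le_antisymm ‹(c - x)^2 ≤ 0› this
    have := pow_eq_zero_iff (n := 2) (by norm_num) |>.1 this
    linarith [sub_eq_zero.1 this]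

end Stmt11Aux

open Stmt11Aux

/-- Let `F = −∇f(X)` be the antigradient, `G = Ξ_s + Ξ_{k−s}` its full
projection onto `T_X M_{≤k}` (so `Ξ_s = Π_{T_X M_s}F` and `Ξ_{k−s}` is a best
rank-`(k−s)` approximation of `F − Ξ_s`), and `G¹ = P_U F + Ξ_{k−s}`,
`G² = F P_V + Ξ_{k−s}`. If `‖G¹‖_F ≥ ‖G²‖_F` then `‖G¹‖² ≥ ½‖G‖²` and
`⟨∇f(X), G¹⟩ = −‖G¹‖² ≤ −(1/√2) g⁻(X) ‖G¹‖` (the `ω = 1/√2` angle condition),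
where `g⁻(X) = ‖G‖_F`. -/
theorem stmt_11 {m n s k : ℕ} (X : Matrix (Fin m) (Fin n) ℝ)
    (hrank : X.rank = s) (hsk : s ≤ k)
    (PU : Matrix (Fin m) (Fin m) ℝ) (PV : Matrix (Fin n) (Fin n) ℝ)
    (hPU : IsOrthProjOnto PU (colSpace X)) (hPV : IsOrthProjOnto PV (rowSpace X))
    (F Ξs Ξk G G1 G2 : Matrix (Fin m) (Fin n) ℝ)
    (hΞs : Ξs = PU * F + F * PV - PU * F * PV)
    (hΞkmem : Ξk ∈ tensorSp (perp (colSpace X)) (perp (rowSpace X)))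
    (hΞkrk : Ξk.rank ≤ k - s)
    (hΞkbest : ∀ Y : Matrix (Fin m) (Fin n) ℝ, Y.rank ≤ k - s →
      frobNorm (F - Ξs - Ξk) ≤ frobNorm (F - Ξs - Y))
    (hG : G = Ξs + Ξk) (hG1 : G1 = PU * F + Ξk) (hG2 : G2 = F * PV + Ξk)
    (h12 : frobNorm G2 ≤ frobNorm G1) :
    (1 / 2) * frobNorm G ^ 2 ≤ frobNorm G1 ^ 2 ∧
    frobInner (-F) G1 = -(frobNorm G1 ^ 2) ∧
    frobInner (-F) G1 ≤ -((1 / Real.sqrt 2) * frobNorm G * frobNorm G1) := by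
  obtain ⟨hPUs, hPUi, hPUc⟩ := hPU
  obtain ⟨hPVs, hPVi, hPVc⟩ := hPV
  -- projector kills Ξk
  have hPUΞ : PU * Ξk = 0 :=
    mul_eq_zero_of_cols fun v => proj_perp_eq_zero ⟨hPUs, hPUi, hPUc⟩ (hΞkmem.1 v)
  have hPVΞt : PV * Ξkᵀ = 0 :=
    mul_eq_zero_of_cols fun v => proj_perp_eq_zero ⟨hPVs, hPVi, hPVc⟩ (hΞkmem.2 v)
  have hΞPV : Ξk * PV = 0 := by
    have := congrArg Matrix.transpose hPVΞt
    simpa [Matrix.transpose_mul, hPVs] using this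
  -- move lemmas
  have left_move : ∀ A B : Matrix (Fin m) (Fin n) ℝ,
      frobInner (PU * A) B = frobInner A (PU * B) := by
    intro A B
    rw [frobInner_eq_trace, frobInner_eq_trace, Matrix.transpose_mul, hPUs, Matrix.mul_assoc]
  have right_move : ∀ A B : Matrix (Fin m) (Fin n) ℝ,
      frobInner (A * PV) B = frobInner A (B * PV) := by
    intro A B
    rw [frobInner_eq_trace, frobInner_eq_trace, Matrix.transpose_mul, hPVs,
      Matrix.trace_mul_cycle PV Aᵀ B, Matrix.trace_mul_comm (B * PV) Aᵀ]
  have fzero : ∀ A : Matrix (Fin m) (Fin n) ℝ, frobInner A (0 : Matrix (Fin m) (Fin n) ℝ) = 0 := by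
    intro A; simp [frobInner]
  -- individual inner products
  have f1 : frobInner (PU * F) (PU * F) = frobInner F (PU * F) := by
    rw [left_move, ← Matrix.mul_assoc, hPUi]
  have f2 : frobInner (F * PV) (F * PV) = frobInner F (F * PV) := by
    rw [right_move, Matrix.mul_assoc, hPVi]
  have f3 : frobInner (PU * F) (F * PV) = frobInner F (PU * (F * PV)) := left_move F (F * PV)
  have f4 : frobInner (PU * F) (PU * F * PV) = frobInner F (PU * (F * PV)) := by
    rw [Matrix.mul_assoc PU F PV, left_move, ← Matrix.mul_assoc PU PU (F * PV), hPUi]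
  have f5 : frobInner (F * PV) (PU * F * PV) = frobInner F (PU * (F * PV)) := by
    rw [right_move, Matrix.mul_assoc (PU * F) PV PV, hPVi, Matrix.mul_assoc]
  have f6 : frobInner (PU * F * PV) (PU * F * PV) = frobInner F (PU * (F * PV)) := by
    rw [right_move, Matrix.mul_assoc (PU * F) PV PV, hPVi, f4]
  have f7 : frobInner (PU * F) Ξk = 0 := by rw [left_move, hPUΞ, fzero]
  have f8 : frobInner (F * PV) Ξk = 0 := by rw [right_move, hΞPV, fzero]
  have f9 : frobInner (PU * F * PV) Ξk = 0 := by rw [right_move, hΞPV, fzero]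
  have hΞsΞ : frobInner Ξs Ξk = 0 := by
    rw [hΞs, frobInner_sub_left, frobInner_add_left, f7, f8, f9]; ring
  -- best approximation ⇒ ⟨F−Ξs, Ξk⟩ = ‖Ξk‖²
  have hbest' : ∀ t : ℝ, frobNorm (F - Ξs - Ξk) ≤ frobNorm (F - Ξs - t • Ξk) := by
    intro t
    apply hΞkbest
    have heq : t • Ξk = Ξk * (t • (1 : Matrix (Fin n) (Fin n) ℝ)) := by
      rw [Matrix.mul_smul, Matrix.mul_one]
    rw [heq]
    exact le_trans (Matrix.rank_mul_le_left Ξk _) hΞkrk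
  have f10 : frobInner F Ξk = frobInner Ξk Ξk := by
    have := inner_eq_self_of_best hbest'
    rw [frobInner_sub_left, hΞsΞ] at this
    linarith
  -- abbreviations
  set p := frobInner F (PU * F) with hp
  set q := frobInner F (F * PV) with hq
  set τ := frobInner F (PU * (F * PV)) with hτ
  set x := frobInner Ξk Ξk with hx
  have τnn : 0 ≤ τ := f6 ▸ frobInner_self_nonneg (PU * F * PV)
  have xnn : 0 ≤ x := frobInner_self_nonneg Ξk
  -- comm versions
  have f3' := (frobInner_comm' (F * PV) (PU * F)).trans f3
  have f4' := (frobInner_comm' (PU * F * PV) (PU * F)).trans f4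
  have f5' := (frobInner_comm' (PU * F * PV) (F * PV)).trans f5
  have f7' := (frobInner_comm' Ξk (PU * F)).trans f7
  have f8' := (frobInner_comm' Ξk (F * PV)).trans f8
  have f9' := (frobInner_comm' Ξk (PU * F * PV)).trans f9
  -- squared norms
  have hG1sq : frobInner G1 G1 = p + x := by
    rw [hG1, frobInner_add_left, frobInner_add_right, frobInner_add_right, f1, f7, f7']
    ring
  have hG2sq : frobInner G2 G2 = q + x := by
    rw [hG2, frobInner_add_left, frobInner_add_right, frobInner_add_right, f2, f8, f8']
    ring
  have hGsq : frobInner G G = p + q - τ + x := by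
    rw [hG, hΞs]
    simp only [frobInner_add_left, frobInner_add_right, frobInner_sub_left, frobInner_sub_right,
      f1, f2, f3, f3', f4, f4', f5, f5', f6, f7, f7', f8, f8', f9, f9']
    ring
  have hFG1 : frobInner F G1 = p + x := by
    rw [hG1, frobInner_add_right, f10]
  have hqp : q + x ≤ p + x := by
    rw [← hG1sq, ← hG2sq]; exact frobInner_le_of_norm_le h12
  have part1 : (1 / 2) * frobNorm G ^ 2 ≤ frobNorm G1 ^ 2 := by
    rw [frobNorm_sq, frobNorm_sq, hGsq, hG1sq]; linarith
  have part2 : frobInner (-F) G1 = -(frobNorm G1 ^ 2) := by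
    rw [frobInner_neg_left, hFG1, frobNorm_sq, hG1sq]
  refine ⟨part1, part2, ?_⟩
  rw [part2]
  have hG1nn := frobNorm_nonneg G1
  have hGnn := frobNorm_nonneg G
  have hGG : frobNorm G ≤ Real.sqrt 2 * frobNorm G1 := by
    have h1 : frobInner G G ≤ 2 * frobInner G1 G1 := by
      rw [hGsq, hG1sq]; linarith
    have h2 : frobNorm G ≤ Real.sqrt (2 * frobInner G1 G1) := by
      unfold frobNorm
      exact Real.sqrt_le_sqrt h1
    calc frobNorm G ≤ Real.sqrt (2 * frobInner G1 G1) := h2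
      _ = Real.sqrt 2 * frobNorm G1 := by
          rw [Real.sqrt_mul (by norm_num : (0:ℝ) ≤ 2)]; rfl
  have hs2 : (0:ℝ) < Real.sqrt 2 := Real.sqrt_pos.2 (by norm_num)
  have hstep : (1 / Real.sqrt 2) * frobNorm G ≤ frobNorm G1 := by
    rw [div_mul_eq_mul_div, one_mul, div_le_iff₀ hs2]
    linarith [hGG]
  have : (1 / Real.sqrt 2) * frobNorm G * frobNorm G1 ≤ frobNorm G1 * frobNorm G1 :=
    mul_le_mul_of_nonneg_right hstep hG1nn
  have hsq : frobNorm G1 * frobNorm G1 = frobNorm G1 ^ 2 := by ring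
  linarith [this, hsq ▸ this]
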